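/- Let U be a subspace of R^n with μ(U) < 1/2, and let A = P_{U^⊥} ∘ P_{U^⊥} be the entrywise (Hadamard) square of the projector onto U^⊥. Then A is invertible and the solution λ of Aλ = 1 (the all-ones vector) is entrywise nonnegative; equivalently, there exists λ ≥ 0 with diag(P_{U^⊥} diag*(λ) P_{U^⊥}) = 1. -/

import Mathlib

open Matrix Finset RealInnerProductSpace

/-- The coherence of a subspace `U` of `ℝⁿ`: `μ(U) = max_i ‖P_U e_i‖²`. -/
noncomputable def coherence {n : ℕ} (U : Submodule ℝ (EuclideanSpace ℝ (Fin n))) : ℝ :=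
  ⨆ i : Fin n, ‖(U.orthogonalProjection (EuclideanSpace.single i 1) : EuclideanSpace ℝ (Fin n))‖^2

lemma aux_nonneg {n : ℕ} (A : Matrix (Fin n) (Fin n) ℝ) (p : Fin n → ℝ)
    (hp : ∀ i, 1/2 < p i)
    (hd : ∀ i, A i i = p i * p i)
    (hs : ∀ i, ∑ j, A i j = p i)
    (hnn : ∀ i j, 0 ≤ A i j)
    (c : ℝ) (hc : 0 ≤ c) (lam : Fin n → ℝ)
    (hlam : A.mulVec lam = fun _ => c) :
    ∀ i, 0 ≤ lam i := by
  by_contra hneg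
  push_neg at hneg
  obtain ⟨i0, hi0⟩ := hneg
  have hne : (univ : Finset (Fin n)).Nonempty := ⟨i0, mem_univ _⟩
  obtain ⟨i, -, hi⟩ := Finset.exists_min_image univ lam hne
  obtain ⟨k, -, hk⟩ := Finset.exists_max_image univ lam hne
  simp only [mem_univ, forall_true_left] at hi hk
  set m := lam i with hm
  set M := lam k with hM
  have hmneg : m < 0 := lt_of_le_of_lt (hi i0) hi0
  -- row equations
  have hrow : ∀ r, ∑ j, A r j * lam j = c := by
    intro r
    have := congrFun hlam r
    simpa [Matrix.mulVec, dotProduct] using this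
  -- off-diagonal sums
  have hoff : ∀ r, ∑ j ∈ univ.erase r, A r j = p r - A r r := by
    intro r
    have := Finset.add_sum_erase univ (fun j => A r j) (mem_univ r)
    have h2 := hs r
    linarith [this, h2]
  have hoffnn : ∀ r, 0 ≤ p r - A r r := by
    intro r
    rw [← hoff r]
    exact Finset.sum_nonneg fun j _ => hnn r j
  -- row i upper bound: c ≤ A i i * m + (p i - A i i) * M
  have hub : c ≤ A i i * m + (p i - A i i) * M := by
    rw [← hrow i, ← Finset.add_sum_erase univ (fun j => A i j * lam j) (mem_univ i), ← hoff i,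
      Finset.sum_mul]
    gcongr with j hj
    · exact hnn i j
    · exact hk j
  -- row k lower bound: A k k * M + (p k - A k k) * m ≤ c
  have hlb : A k k * M + (p k - A k k) * m ≤ c := by
    rw [← hrow k, ← Finset.add_sum_erase univ (fun j => A k j * lam j) (mem_univ k), ← hoff k,
      Finset.sum_mul]
    gcongr with j hj
    · exact hnn k j
    · exact hi j
  have ha := hp i
  have hb := hp k
  have ha2 := hd i
  have hb2 := hd k
  have hoa := hoffnn i
  have hob := hoffnn k
  rw [ha2] at hub hoa
  rw [hb2] at hlb hob
  set a := p i
  set b := p k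
  -- c ≤ a²m + (a-a²)M ; b²M + (b-b²)m ≤ c
  have hbb : (0:ℝ) < b * b := by nlinarith
  have haa : (0:ℝ) < a * a := by nlinarith
  have e1 : (a - a*a) * (b*b*M) ≤ (a - a*a) * (c + (b - b*b) * (-m)) :=
    mul_le_mul_of_nonneg_left (by linarith) hoa
  have e2 : b*b * (c + a*a*(-m)) ≤ b*b * ((a - a*a) * M) :=
    mul_le_mul_of_nonneg_left (by linarith) hbb.le
  have t1 : (0:ℝ) ≤ (b*b - (a - a*a)) * c := by
    have h14 : a - a*a ≤ 1/4 := by nlinarith [sq_nonneg (2*a - 1)]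
    have : (1:ℝ)/4 < b*b := by nlinarith
    exact mul_nonneg (by linarith) hc
  have t2 : (a - a*a) * (b - b*b) * (-m) < a*a*(b*b) * (-m) := by
    have s1 : (a - a*a) * (b - b*b) ≤ a*a * (b - b*b) :=
      mul_le_mul_of_nonneg_right (by nlinarith) hob
    have s2 : a*a * (b - b*b) < a*a*(b*b) := by nlinarith [mul_pos haa (mul_pos (show (0:ℝ) < b by linarith) (show (0:ℝ) < 2*b - 1 by linarith))]
    exact mul_lt_mul_of_pos_right (lt_of_le_of_lt s1 s2) (by linarith)
  nlinarith [e1, e2, t1, t2]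

/-- if `μ(U) < 1/2` and `P` is the orthogonal projector matrix onto `Uᗮ`,
then the Hadamard square `A = P ∘ P` is invertible and the solution of `Aλ = 1` is
entrywise nonnegative; equivalently there is `λ ≥ 0` with
`diag(P diag*(λ) P) = 1`. -/
theorem hadamard_square_projector_system (n : ℕ) (U : Submodule ℝ (EuclideanSpace ℝ (Fin n)))
    (h : coherence U < 1 / 2) (P : Matrix (Fin n) (Fin n) ℝ)
    (hPsymm : P.IsSymm) (hPidem : P * P = P)
    (hPfix : ∀ v : EuclideanSpace ℝ (Fin n), P.mulVec v = v ↔ v ∈ Uᗮ) :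
    IsUnit (Matrix.of fun i j => P i j * P i j) ∧
    ∃ lam : Fin n → ℝ, (∀ i, 0 ≤ lam i) ∧
      (Matrix.of fun i j => P i j * P i j).mulVec lam = 1 ∧
      ∀ i, (P * Matrix.diagonal lam * P) i i = 1 := by
  set A : Matrix (Fin n) (Fin n) ℝ := Matrix.of fun i j => P i j * P i j with hAdef
  set p : Fin n → ℝ := fun i => P i i with hpdef
  have hd : ∀ i, A i i = p i * p i := fun i => rfl
  have hnn : ∀ i j, 0 ≤ A i j := fun i j => mul_self_nonneg _
  -- row sums of A equal the diagonal of P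
  have hs : ∀ i, ∑ j, A i j = p i := by
    intro i
    have h1 : (P * P) i i = P i i := by rw [hPidem]
    rw [Matrix.mul_apply] at h1
    calc ∑ j, A i j = ∑ j, P i j * P j i := by
          refine Finset.sum_congr rfl fun j _ => ?_
          rw [hPsymm.apply i j]
          rfl
      _ = p i := h1
  -- the adjointness property of P
  have hadj : ∀ x y : Fin n → ℝ, P.mulVec x ⬝ᵥ y = x ⬝ᵥ P.mulVec y := by
    intro x y
    rw [dotProduct_comm, Matrix.dotProduct_mulVec, ← Matrix.mulVec_transpose, hPsymm.eq,
      dotProduct_comm]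
  -- P kills U
  have hUker : ∀ u : EuclideanSpace ℝ (Fin n), u ∈ U → P.mulVec u = 0 := by
    intro u hu
    have hw : P.mulVec (P.mulVec u) = P.mulVec u := by
      rw [Matrix.mulVec_mulVec, hPidem]
    have hwmem : (WithLp.toLp 2 (P.mulVec u) : EuclideanSpace ℝ (Fin n)) ∈ Uᗮ := (hPfix _).1 hw
    have hinner : (u : Fin n → ℝ) ⬝ᵥ P.mulVec u = 0 := by
      have h0 : (inner ℝ u (WithLp.toLp 2 (P.mulVec u) : EuclideanSpace ℝ (Fin n)) : ℝ) = 0 :=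
        (Submodule.mem_orthogonal U _).1 hwmem u hu
      simpa [PiLp.inner_apply, dotProduct, RCLike.inner_apply, mul_comm] using h0
    have hdot : P.mulVec u ⬝ᵥ P.mulVec u = 0 := by
      rw [hadj, hw]
      exact hinner
    exact dotProduct_self_eq_zero.1 hdot
  -- diagonal entries exceed 1/2
  have hp : ∀ i, 1/2 < p i := by
    intro i
    set e : EuclideanSpace ℝ (Fin n) := EuclideanSpace.single i 1 with he
    set a : EuclideanSpace ℝ (Fin n) :=
      (U.orthogonalProjection e : EuclideanSpace ℝ (Fin n)) with ha
    have hb : P.mulVec (e - a) = e - a :=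
      (hPfix _).2 (Submodule.sub_starProjection_mem_orthogonal (K := U) e)
    have ha0 : P.mulVec a = 0 := hUker a (U.orthogonalProjection e).2
    have hPe : P.mulVec e = e - a := by
      have : P.mulVec e = P.mulVec (e - a) + P.mulVec a := by
        rw [← Matrix.mulVec_add]
        congr 1
        funext j
        simp [PiLp.sub_apply, PiLp.add_apply]
      rw [this, hb, ha0, add_zero]
    have hPii : p i = 1 - a i := by
      have h1 : (P.mulVec e) i = P i i := by
        simp [Matrix.mulVec, dotProduct, he, EuclideanSpace.single_apply,
          mul_ite, Finset.sum_ite_eq']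
      have h2 : (P.mulVec e) i = 1 - a i := by
        rw [hPe]
        simp [PiLp.sub_apply, he, EuclideanSpace.single_apply]
      rw [show p i = P i i from rfl, ← h1]
      exact h2
    have hai : a i = ‖a‖^2 := by
      have h0 : (inner ℝ (e - a) a : ℝ) = 0 :=
        Submodule.starProjection_inner_eq_zero (K := U) e a (U.orthogonalProjection e).2
      have h1 : (inner ℝ e a : ℝ) = a i := by
        rw [he]
        rw [EuclideanSpace.inner_single_left]
        simp
      have h2 : (inner ℝ a a : ℝ) = ‖a‖^2 := real_inner_self_eq_norm_sq a
      rw [inner_sub_left] at h0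
      rw [← h2]
      rw [← h1]
      linarith
    have hcoh : ‖a‖^2 ≤ coherence U := by
      have : BddAbove (Set.range fun i : Fin n =>
          ‖(U.orthogonalProjection (EuclideanSpace.single i 1) :
            EuclideanSpace ℝ (Fin n))‖^2) := Set.Finite.bddAbove (Set.finite_range _)
      exact le_ciSup this i
    rw [hPii, hai]
    linarith
  -- injectivity of A
  have hinj : Function.Injective A.mulVec := by
    intro x y hxy
    have h0 : A.mulVec (x - y) = fun _ => (0:ℝ) := by
      funext j
      rw [Matrix.mulVec_sub, hxy]
      simp
    have h0' : A.mulVec (y - x) = fun _ => (0:ℝ) := by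
      funext j
      rw [Matrix.mulVec_sub, hxy]
      simp
    have h1 := aux_nonneg A p hp hd hs hnn 0 le_rfl (x - y) h0
    have h2 := aux_nonneg A p hp hd hs hnn 0 le_rfl (y - x) h0'
    funext j
    have := h1 j
    have := h2 j
    simp only [Pi.sub_apply] at *
    linarith
  have hA : IsUnit A := Matrix.mulVec_injective_iff_isUnit.1 hinj
  refine ⟨hA, ?_⟩
  have hAdet : IsUnit A.det := (Matrix.isUnit_iff_isUnit_det A).1 hA
  refine ⟨A⁻¹.mulVec 1, ?_, ?_, ?_⟩
  case refine_2 =>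
    rw [Matrix.mulVec_mulVec, Matrix.mul_nonsing_inv _ hAdet, Matrix.one_mulVec]
  case refine_1 =>
    have hAlam : A.mulVec (A⁻¹.mulVec 1) = fun _ => (1:ℝ) := by
      rw [Matrix.mulVec_mulVec, Matrix.mul_nonsing_inv _ hAdet, Matrix.one_mulVec]
      rfl
    exact aux_nonneg A p hp hd hs hnn 1 zero_le_one _ hAlam
  case refine_3 =>
    intro i
    have hAlam : A.mulVec (A⁻¹.mulVec 1) = 1 := by
      rw [Matrix.mulVec_mulVec, Matrix.mul_nonsing_inv _ hAdet, Matrix.one_mulVec]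
    have h1 : (A.mulVec (A⁻¹.mulVec 1)) i = 1 := by rw [hAlam]; rfl
    rw [← h1]
    rw [Matrix.mul_apply]
    simp only [Matrix.mul_diagonal]
    rw [Matrix.mulVec]
    simp only [dotProduct, hAdef, Matrix.of_apply]
    refine Finset.sum_congr rfl fun j _ => ?_
    rw [hPsymm.apply i j]
    ring
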